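/- Let T be a finite group with a subgroup H of index t, let D = HgH ∪ Hg⁻¹H for some g ∈ T \ H, and suppose the coset graph X = X(T, H, D) has a Hamilton cycle. Let G = T × ⟨c⟩ where c has prime order p with gcd(t, p) = 1. Then the coset graph Y₂ = X(G, H, D ∪ HcH ∪ Hc⁻¹H) has a Hamilton cycle. -/

import Mathlib

open Pointwise

/-- The coset graph `X(G, H, D)` on the right cosets of `H` in `G`:
`Hx ∼ Hy` iff the cosets are distinct and `y * x⁻¹ ∈ D` (symmetrized). -/
def cosetGraph (G : Type*) [Group G] (H : Subgroup G) (D : Set G) :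
    SimpleGraph (Quotient (QuotientGroup.rightRel H)) where
  Adj A B := A ≠ B ∧ ∃ x y : G, Quotient.mk _ x = A ∧ Quotient.mk _ y = B ∧
      (y * x⁻¹ ∈ D ∨ x * y⁻¹ ∈ D)
  symm := by
    constructor
    rintro A B ⟨hne, x, y, hx, hy, h⟩
    exact ⟨hne.symm, y, x, hy, hx, h.symm⟩
  loopless := by constructor; rintro A ⟨hne, _⟩; exact hne rfl

/-- A graph has a Hamilton cycle. -/
def HasHamiltonCycle {V : Type*} (X : SimpleGraph V) : Prop :=
  letI := Classical.decEq V
  ∃ (v : V) (w : X.Walk v v), w.IsHamiltonianCycle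

/-! If `a :: m` lists a Hamilton cycle of `G` and `L` a Hamilton path of `H`, a Hamilton cycle of
`G □ H` runs through `m × L` row by row, reading `m` alternately forwards and backwards; the last
row ends at an end of `m`, which is a neighbour of `a`, and the cycle returns along the column
`{a} × L`. The coset graph `X(T × ⟨c⟩, H, D ∪ HcH ∪ Hc⁻¹H)` contains `X(T, H, D) □ Cay(⟨c⟩, {c})`
as a spanning subgraph via `(Hx, d) ↦ (H × 1)(x, d)`, and `1, c, …, c ^ (p - 1)` is a Hamilton path
of the Cayley graph. -/

open SimpleGraph

section

variable {V W : Type*}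

theorem HasHamiltonCycle.exists_list {G : SimpleGraph V} (hG : HasHamiltonCycle G) :
    ∃ l : List V, (l ++ l.take 1).IsChain G.Adj ∧ l.Nodup ∧ (∀ v, v ∈ l) ∧ 3 ≤ l.length := by
  classical
  obtain ⟨v, w, hw⟩ := hG
  have hsupp : w.support = w.support.dropLast ++ [v] := by
    conv_lhs => rw [← List.dropLast_append_getLast w.support_ne_nil, Walk.getLast_support]
  have hlen : w.support.dropLast.length = w.length := by simp
  obtain ⟨u, l, hl⟩ : ∃ u l, w.support.dropLast = u :: l := List.exists_cons_of_ne_nil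
    (List.ne_nil_of_length_pos (by have := hw.isCycle.three_le_length; omega))
  obtain rfl : u = v := by
    have := w.cons_tail_support
    rw [hsupp, hl] at this
    exact (List.cons_eq_cons.mp this).1.symm
  refine ⟨w.support.dropLast, ?_, hw.isCycle.nodup_dropLast_support, fun x => ?_, ?_⟩
  · rw [hl, List.take_succ_cons, List.take_zero, ← hl, ← hsupp]
    exact w.isChain_adj_support
  · have := hw.mem_support x
    rw [hsupp, hl] at this
    rw [hl]
    simp only [List.mem_append, List.mem_cons] at this ⊢
    tauto
  · rw [hlen]
    exact hw.isCycle.three_le_length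

theorem HasHamiltonCycle.of_list {G : SimpleGraph V} {l : List V}
    (hchain : (l ++ l.take 1).IsChain G.Adj) (hnd : l.Nodup) (hcov : ∀ v, v ∈ l)
    (hlen : 3 ≤ l.length) : HasHamiltonCycle G := by
  classical
  obtain _ | ⟨a, m⟩ := l
  · simp at hlen
  rw [List.take_succ_cons, List.take_zero, List.cons_append] at hchain
  obtain ⟨w, hw⟩ : ∃ w : G.Walk a a, w.support = a :: (m ++ [a]) :=
    ⟨(Walk.ofSupport _ (List.cons_ne_nil _ _) hchain).copy (by simp) (by simp),
      (Walk.support_copy _ _ _).trans (Walk.support_ofSupport _ _)⟩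
  have hsupp : w.support.tail = m ++ [a] := by rw [hw, List.tail_cons]
  have hnd' : (m ++ [a]).Nodup := (List.perm_append_singleton a m).nodup_iff.mpr hnd
  have hlength : 3 ≤ w.length := by
    have := w.length_support
    rw [hw] at this
    simp only [List.length_cons, List.length_append, List.length_nil] at this hlen
    omega
  refine ⟨a, w, Walk.isHamiltonianCycle_iff_isCycle_and_support_count_tail_eq_one.mpr ⟨?_, ?_⟩⟩
  · refine Walk.isCycle_iff_isPath_tail_and_le_length.mpr ⟨Walk.IsPath.mk' ?_, hlength⟩
    rwa [Walk.support_tail_of_not_nil _ (Walk.not_nil_iff_lt_length.mpr (by omega)), hsupp]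
  · intro x
    rw [hsupp]
    exact List.count_eq_one_of_mem hnd' (by simpa [or_comm] using hcov x)

theorem HasHamiltonCycle.map {G : SimpleGraph V} {G' : SimpleGraph W} (f : G →g G')
    (hf : Function.Bijective f) (h : HasHamiltonCycle G) : HasHamiltonCycle G' := by
  classical
  obtain ⟨v, w, hw⟩ := h
  exact ⟨f v, w.map f, hw.map hf⟩

def boustrophedon (l : List V) : List W → List (V × W)
  | [] => []
  | b :: L => l.map (·, b) ++ boustrophedon l.reverse L

@[simp]
theorem boustrophedon_nil_left (L : List W) : boustrophedon ([] : List V) L = [] := by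
  induction L with
  | nil => rfl
  | cons b L ih => simp [boustrophedon, ih]

theorem mem_boustrophedon {l : List V} {L : List W} {z : V × W} :
    z ∈ boustrophedon l L ↔ z.1 ∈ l ∧ z.2 ∈ L := by
  induction L generalizing l with
  | nil => simp [boustrophedon]
  | cons b L ih =>
    simp only [boustrophedon, List.mem_append, List.mem_map, ih, List.mem_reverse, List.mem_cons]
    grind

theorem length_boustrophedon (l : List V) (L : List W) :
    (boustrophedon l L).length = l.length * L.length := by
  induction L generalizing l with
  | nil => rfl
  | cons b L ih => simp [boustrophedon, ih, Nat.mul_succ, Nat.add_comm]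

theorem nodup_boustrophedon {l : List V} {L : List W} (hl : l.Nodup) (hL : L.Nodup) :
    (boustrophedon l L).Nodup := by
  induction L generalizing l with
  | nil => exact List.nodup_nil
  | cons b L ih =>
    rw [List.nodup_cons] at hL
    refine List.nodup_append.mpr
      ⟨hl.map fun _ _ h => congrArg Prod.fst h, ih (List.nodup_reverse.mpr hl) hL.2, ?_⟩
    rintro _ hz z hz' rfl
    obtain ⟨u, -, rfl⟩ := List.mem_map.mp hz
    exact hL.1 (mem_boustrophedon.mp hz').2

theorem head?_boustrophedon_cons (l : List V) (b : W) (L : List W) :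
    (boustrophedon l (b :: L)).head? = l.head?.map (·, b) := by
  cases l <;> simp [boustrophedon]

theorem of_mem_getLast?_boustrophedon {l : List V} {L : List W} {z : V × W}
    (hz : z ∈ (boustrophedon l L).getLast?) :
    (z.1 ∈ l.head? ∨ z.1 ∈ l.getLast?) ∧ z.2 ∈ L.getLast? := by
  induction L generalizing l with
  | nil => simp [boustrophedon] at hz
  | cons b L ih =>
    cases L with
    | nil =>
      simp only [boustrophedon, List.append_nil, List.getLast?_map] at hz
      obtain ⟨u, hu, rfl⟩ := Option.mem_map.mp hz
      exact ⟨Or.inr hu, rfl⟩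
    | cons b' L =>
      rcases l with _ | ⟨a, l⟩
      · simp at hz
      rw [boustrophedon, List.getLast?_append_of_ne_nil _ (by simp [boustrophedon])] at hz
      obtain ⟨h1, h2⟩ := ih hz
      rw [List.head?_reverse, List.getLast?_reverse] at h1
      exact ⟨h1.symm, by simpa using h2⟩

theorem isChain_boustrophedon {G : SimpleGraph V} {H : SimpleGraph W} {l : List V}
    {L : List W} (hl : l.IsChain G.Adj) (hL : L.IsChain H.Adj) :
    (boustrophedon l L).IsChain (G □ H).Adj := by
  induction L generalizing l with
  | nil => exact List.IsChain.nil
  | cons b L ih =>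
    refine List.isChain_append.mpr ⟨?_, ih (List.isChain_reverse.mpr ?_) hL.tail, ?_⟩
    · exact (List.isChain_map _).mpr (hl.imp fun _ _ h => boxProd_adj_left.mpr h)
    · exact hl.imp fun _ _ h => h.symm
    · cases L with
      | nil => simp [boustrophedon]
      | cons b' L =>
        rw [List.getLast?_map, head?_boustrophedon_cons, List.head?_reverse]
        rintro _ hz _ hz'
        obtain ⟨u, hu, rfl⟩ := Option.mem_map.mp hz
        obtain ⟨u', hu', rfl⟩ := Option.mem_map.mp hz'
        cases hu.symm.trans hu'
        exact boxProd_adj_right.mpr hL.rel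

theorem isChain_boustrophedon_append_column {G : SimpleGraph V} {H : SimpleGraph W}
    {a b : V} {m : List V} {x : W} {L : List W} (hG : (a :: b :: m ++ [a]).IsChain G.Adj)
    (hH : (x :: L).IsChain H.Adj) :
    (boustrophedon (b :: m) (x :: L) ++ (x :: L).reverse.map (a, ·) ++ [(b, x)]).IsChain
      (G □ H).Adj := by
  obtain ⟨hab, hcycle⟩ := List.isChain_cons_cons.mp hG
  obtain ⟨hbm, -, hma⟩ := (List.isChain_append (l₁ := b :: m)).mp hcycle
  refine List.isChain_append.mpr
    ⟨List.isChain_append.mpr ⟨isChain_boustrophedon hbm hH, ?_, ?_⟩, List.isChain_singleton _, ?_⟩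
  · exact (List.isChain_map _).mpr
      (List.isChain_reverse.mpr (hH.imp fun _ _ h => boxProd_adj_right.mpr h.symm))
  · rintro ⟨u, v⟩ hz w hw
    rw [List.head?_map, List.head?_reverse] at hw
    obtain ⟨v', hv', rfl⟩ := Option.mem_map.mp hw
    obtain ⟨hu | hu, hv⟩ := of_mem_getLast?_boustrophedon hz <;> cases Option.mem_unique hv hv'
    · cases hu
      exact boxProd_adj_left.mpr hab.symm
    · exact boxProd_adj_left.mpr (hma u hu a rfl)
  · rw [List.getLast?_append_of_ne_nil _ (by simp), List.getLast?_map, List.getLast?_reverse]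
    rintro _ ⟨⟩ _ ⟨⟩
    exact boxProd_adj_left.mpr hab

theorem HasHamiltonCycle.boxProd [DecidableEq W] {G : SimpleGraph V} {H : SimpleGraph W}
    (hG : HasHamiltonCycle G) {x y : W} {q : H.Walk x y} (hq : q.IsHamiltonian) :
    HasHamiltonCycle (G □ H) := by
  obtain ⟨_ | ⟨a, _ | ⟨b, m⟩⟩, hchain, hnd, hcov, hlen⟩ := hG.exists_list
  · simp at hlen
  · simp at hlen
  obtain ⟨hna, hnd⟩ := List.nodup_cons.mp hnd
  obtain ⟨L, hL⟩ : ∃ L, q.support = x :: L := ⟨_, q.cons_tail_support.symm⟩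
  have hLnd : (x :: L).Nodup := hL ▸ hq.isPath.support_nodup
  have hLcov : ∀ w, w ∈ x :: L := hL ▸ hq.mem_support
  refine HasHamiltonCycle.of_list
    (l := boustrophedon (b :: m) (x :: L) ++ (x :: L).reverse.map (a, ·))
    (isChain_boustrophedon_append_column hchain (hL ▸ q.isChain_adj_support)) ?_ ?_ ?_
  · refine List.nodup_append.mpr ⟨nodup_boustrophedon hnd hLnd,
      (List.nodup_reverse.mpr hLnd).map fun _ _ h => congrArg Prod.snd h, ?_⟩
    rintro z hz _ hz' rfl
    obtain ⟨_, _, rfl⟩ := List.mem_map.mp hz'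
    exact hna (mem_boustrophedon.mp hz).1
  · rintro ⟨u, v⟩
    rcases List.mem_cons.mp (hcov u) with rfl | hu
    · exact List.mem_append_right _ (List.mem_map.mpr ⟨v, List.mem_reverse.mpr (hLcov v), rfl⟩)
    · exact List.mem_append_left _ (mem_boustrophedon.mpr ⟨hu, hLcov v⟩)
  · simp only [List.length_append, length_boustrophedon, List.length_map, List.length_reverse,
      List.length_cons] at hlen ⊢
    nlinarith

theorem exists_isHamiltonian_fromRel_mul {C : Type*} [Group C] [DecidableEq C] {c : C}
    (hc : orderOf c ≠ 0) (hC : ∀ x, x ∈ Subgroup.zpowers c) :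
    ∃ (x y : C) (q : (fromRel fun d e : C => e = c * d).Walk x y), q.IsHamiltonian := by
  have hinj : ∀ i < orderOf c, ∀ j < orderOf c, c ^ i = c ^ j → i = j :=
    fun i hi j hj h => pow_injOn_Iio_orderOf hi hj h
  set L := (List.range (orderOf c)).map (c ^ ·)
  have hne : L ≠ [] := by simp [L, hc]
  have hchain : L.IsChain (fromRel fun d e : C => e = c * d).Adj := by
    refine (List.isChain_map _).mpr ((List.isChain_range _ _).mpr fun i hi => ?_)
    refine (fromRel_adj _ _ _).mpr ⟨fun h => ?_, Or.inl (pow_succ' c i)⟩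
    have := hinj i (by omega) (i + 1) (by omega) h
    omega
  have hnd : L.Nodup := List.nodup_range.map_on fun i hi j hj h =>
    hinj i (List.mem_range.mp hi) j (List.mem_range.mp hj) h
  have hcov : ∀ x, x ∈ L := by
    intro x
    obtain ⟨i, hi, rfl⟩ := Finset.mem_image.mp
      ((orderOf_pos_iff.mp (Nat.pos_of_ne_zero hc)).mem_zpowers_iff_mem_range_orderOf.mp (hC x))
    exact List.mem_map.mpr ⟨i, List.mem_range.mpr (Finset.mem_range.mp hi), rfl⟩
  refine ⟨_, _, Walk.ofSupport L hne hchain, (Walk.IsPath.mk' ?_).isHamiltonian_of_mem ?_⟩ <;>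
    rw [Walk.support_ofSupport]
  exacts [hnd, hcov]

section CosetGraph

open QuotientGroup

variable {T C : Type*} [Group T] [Group C] (H : Subgroup T)

def rightCosetProdBot (q : Quotient (rightRel H) × C) :
    Quotient (rightRel (H.prod (⊥ : Subgroup C))) :=
  Quotient.map (·, q.2) (fun _ _ h => rightRel_apply.mpr
    (Subgroup.mem_prod.mpr ⟨by simpa using rightRel_apply.mp h, by simp⟩)) q.1

theorem rightCosetProdBot_bijective : Function.Bijective (rightCosetProdBot H (C := C)) := by
  refine ⟨?_, ?_⟩
  · rintro ⟨⟨x⟩, d⟩ ⟨⟨y⟩, e⟩ h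
    obtain ⟨hxy, hde⟩ := Subgroup.mem_prod.mp (rightRel_apply.mp (Quotient.exact h))
    simp only [Prod.fst_mul, Prod.fst_inv, Prod.snd_mul, Prod.snd_inv, Subgroup.mem_bot,
      mul_inv_eq_one] at hxy hde
    exact Prod.ext (Quotient.sound (rightRel_apply.mpr hxy)) hde.symm
  · rintro ⟨x, d⟩
    exact ⟨(Quotient.mk _ x, d), rfl⟩

def cosetGraphBoxProdHom (D : Set T) (c : C) {S : Set (T × C)} (hD : ∀ d ∈ D, (d, 1) ∈ S)
    (hc : (1, c) ∈ S) :
    (cosetGraph T H D).boxProd (fromRel fun d e : C => e = c * d) →g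
      cosetGraph (T × C) (H.prod ⊥) S where
  toFun := rightCosetProdBot H
  map_rel' := by
    rintro ⟨A, d⟩ ⟨B, e⟩ hAB
    refine ⟨(rightCosetProdBot_bijective H).injective.ne hAB.ne, ?_⟩
    rcases boxProd_adj.mp hAB with ⟨⟨-, x, y, rfl, rfl, hxy⟩, rfl : d = e⟩ | ⟨hde, rfl : A = B⟩
    · refine ⟨(x, d), (y, d), rfl, rfl, ?_⟩
      simp only [Prod.inv_mk, Prod.mk_mul_mk, mul_inv_cancel]
      exact hxy.imp (hD _) (hD _)
    · induction A using Quotient.inductionOn with | h x => ?_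
      refine ⟨(x, d), (x, e), rfl, rfl, ?_⟩
      simp only [Prod.inv_mk, Prod.mk_mul_mk, mul_inv_cancel]
      rcases ((fromRel_adj _ _ _).mp hde).2 with rfl | rfl
      · exact Or.inl (by rwa [mul_inv_cancel_right])
      · exact Or.inr (by rwa [mul_inv_cancel_right])

end CosetGraph

end

theorem stmt_4_general (T : Type*) [Group T] (H : Subgroup T)
    (D : Set T)
    (hX : HasHamiltonCycle (cosetGraph T H D))
    (C : Type*) [Group C] (c : C) (hC : ∀ x : C, x ∈ Subgroup.zpowers c)
    (p : ℕ) (hp : p.Prime) (hc : orderOf c = p) :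
    HasHamiltonCycle (cosetGraph (T × C) (H.prod ⊥)
      ((fun x => (x, (1 : C))) '' D ∪ (fun h => (h, c)) '' (H : Set T) ∪
        (fun h => (h, c⁻¹)) '' (H : Set T))) := by
  classical
  obtain ⟨_, _, q, hq⟩ := exists_isHamiltonian_fromRel_mul (hc ▸ hp.ne_zero) hC
  exact (hX.boxProd hq).map
    (cosetGraphBoxProdHom H D c (fun d hd => Or.inl (Or.inl ⟨d, hd, rfl⟩))
      (Or.inl (Or.inr ⟨1, H.one_mem, rfl⟩)))
    (rightCosetProdBot_bijective H)

theorem stmt_4 (T : Type*) [Group T] [Fintype T] (H : Subgroup T) (g : T) (hg : g ∉ H)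
    (D : Set T) (hD : D = (H : Set T) * {g} * (H : Set T) ∪ (H : Set T) * {g⁻¹} * (H : Set T))
    (hX : HasHamiltonCycle (cosetGraph T H D))
    (C : Type*) [Group C] (c : C) (hC : ∀ x : C, x ∈ Subgroup.zpowers c)
    (p : ℕ) (hp : p.Prime) (hc : orderOf c = p)
    (hcop : Nat.gcd H.index p = 1) :
    HasHamiltonCycle (cosetGraph (T × C) (H.prod ⊥)
      ((fun x => (x, (1 : C))) '' D ∪ (fun h => (h, c)) '' (H : Set T) ∪
        (fun h => (h, c⁻¹)) '' (H : Set T))) :=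
  stmt_4_general T H D hX C c hC p hp hc
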